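/- arXiv:2407.14303 — 2 statements merged into one kernel-verified Lean document; each statement's English description precedes it below -/
import Mathlib

section
/- If A is a symmetric positive definite matrix pushing Σ_s to Σ_t in the sense A Σ_s A = Σ_t, then A equals Σ_s^{-1/2}(Σ_s^{1/2} Σ_t Σ_s^{1/2})^{1/2} Σ_s^{-1/2}; i.e., this is the unique symmetric positive definite solution of A Σ_s A = Σ_t. -/
open Matrix

/-- The (unique) positive semidefinite square root, extended by `0` to all matrices. -/
noncomputable def sqrtm {m : Type*} [Fintype m] [DecidableEq m]
    (A : Matrix m m ℝ) : Matrix m m ℝ :=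
  open scoped Classical in
  if h : A.PosSemidef then
    h.1.eigenvectorUnitary.1 * diagonal ((↑) ∘ Real.sqrt ∘ h.1.eigenvalues) *
      (star h.1.eigenvectorUnitary : Matrix m m ℝ)
  else 0

noncomputable def Matrix.PosSemidef.sqrt {m : Type*} [Fintype m] [DecidableEq m]
    {A : Matrix m m ℝ} (_h : A.PosSemidef) : Matrix m m ℝ :=
  cfc Real.sqrt A

lemma Matrix.PosSemidef.spec_nonneg {m : Type*} [Fintype m] [DecidableEq m]
    {A : Matrix m m ℝ} (h : A.PosSemidef) : ∀ x ∈ spectrum ℝ A, 0 ≤ x := by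
  intro x hx
  rw [h.1.spectrum_real_eq_range_eigenvalues] at hx
  obtain ⟨i, rfl⟩ := hx
  exact h.eigenvalues_nonneg i

lemma Matrix.PosSemidef.posSemidef_sqrt {m : Type*} [Fintype m] [DecidableEq m]
    {A : Matrix m m ℝ} (h : A.PosSemidef) : h.sqrt.PosSemidef := by
  rw [Matrix.PosSemidef.sqrt, h.1.cfc_eq, IsHermitian.cfc, Unitary.conjStarAlgAut_apply]
  have hd : (diagonal (RCLike.ofReal ∘ Real.sqrt ∘ h.1.eigenvalues) : Matrix m m ℝ).PosSemidef :=
    posSemidef_diagonal_iff.mpr fun i => by simp [Real.sqrt_nonneg]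
  exact hd.mul_mul_conjTranspose_same (h.1.eigenvectorUnitary : Matrix m m ℝ)

lemma Matrix.PosSemidef.sqrt_mul_self {m : Type*} [Fintype m] [DecidableEq m]
    {A : Matrix m m ℝ} (h : A.PosSemidef) : h.sqrt * h.sqrt = A := by
  have hsa : IsSelfAdjoint A := h.1
  rw [Matrix.PosSemidef.sqrt, ← cfc_mul Real.sqrt Real.sqrt A]
  rw [cfc_congr (g := fun x => x) (fun x hx => Real.mul_self_sqrt (h.spec_nonneg x hx))]
  exact cfc_id' ℝ A hsa

lemma Matrix.PosSemidef.eq_sqrt_of_sq_eq {m : Type*} [Fintype m] [DecidableEq m]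
    {A B : Matrix m m ℝ} (hB : B.PosSemidef) (hA : A.PosSemidef) (h : B ^ 2 = A) :
    B = hA.sqrt := by
  subst h
  have hsa : IsSelfAdjoint B := hB.1
  rw [Matrix.PosSemidef.sqrt, ← cfc_comp_pow Real.sqrt 2 B (ha := hsa)]
  rw [cfc_congr (g := fun x => x) (fun x hx => Real.sqrt_sq (hB.spec_nonneg x hx))]
  exact (cfc_id' ℝ B hsa).symm

lemma sqrtm_eq {m : Type*} [Fintype m] [DecidableEq m]
    {A : Matrix m m ℝ} (h : A.PosSemidef) : sqrtm A = h.sqrt := by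
  rw [sqrtm, dif_pos h, Matrix.PosSemidef.sqrt, h.1.cfc_eq, IsHermitian.cfc, Unitary.conjStarAlgAut_apply]
  rfl

/-- Uniqueness of the Monge map: a symmetric positive definite `A` with `A Σs A = Σt`
necessarily equals `Σs^{-1/2} (Σs^{1/2} Σt Σs^{1/2})^{1/2} Σs^{-1/2}`. -/
theorem monge_map_unique {n : ℕ}
    (Ss St A : Matrix (Fin n) (Fin n) ℝ) (hs : Ss.PosDef) (ht : St.PosDef)
    (hA : A.PosDef) (hpush : A * Ss * A = St) :
    A = (sqrtm Ss)⁻¹ * sqrtm (sqrtm Ss * St * sqrtm Ss) * (sqrtm Ss)⁻¹ := by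
  have hsS : Ss.PosSemidef := hs.posSemidef
  set S : Matrix (Fin n) (Fin n) ℝ := sqrtm Ss with hSdef
  have hSeq : S = hsS.sqrt := sqrtm_eq hsS
  have hSps : S.PosSemidef := hSeq ▸ hsS.posSemidef_sqrt
  have hSS : S * S = Ss := by rw [hSeq]; exact hsS.sqrt_mul_self
  have hSherm : Sᴴ = S := hSps.1
  have hSt : Sᵀ = S := by simpa using hSherm
  -- S is invertible
  have hdet : IsUnit S.det := by
    have : S.det * S.det = Ss.det := by rw [← det_mul, hSS]
    have hSsdet : Ss.det ≠ 0 := hs.det_pos.ne'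
    exact isUnit_iff_ne_zero.mpr (fun h0 => hSsdet (by rw [← this, h0, mul_zero]))
  -- S A S is PosSemidef
  have hSAS : (S * A * S).PosSemidef := by
    simpa [hSt] using hA.posSemidef.conjTranspose_mul_mul_same S
  -- S St S is PosSemidef
  have hSStS : (S * St * S).PosSemidef := by
    simpa [hSt] using ht.posSemidef.conjTranspose_mul_mul_same S
  have hsq : (S * A * S) ^ 2 = S * St * S := by
    rw [← hpush, pow_two]
    simp only [← hSS, Matrix.mul_assoc]
  have key : S * A * S = hSStS.sqrt := hSAS.eq_sqrt_of_sq_eq hSStS hsq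
  have hrhs : sqrtm (S * St * S) = S * A * S := by rw [sqrtm_eq hSStS, key]
  rw [hrhs, mul_assoc, mul_assoc, mul_assoc, Matrix.mul_nonsing_inv _ hdet, mul_one,
    ← mul_assoc, Matrix.nonsing_inv_mul _ hdet, one_mul]
end

section
/- Let A ∈ E_{f,n} be a symmetric circulant n×n matrix whose first row vanishes at indices l ∈ [⌈f/2⌉+1, n−⌊f/2⌋], with Fourier diagonalization A = F_n diag(q) F_n*, and suppose f divides n. Define the subsampled vector p ∈ R^f by (p)_l = (q)_{(l−1)n/f + 1}. Then the filter h ∈ R^f defined by h = f^{-1/2} F_f* p is real, and for every x ∈ R^n, A x equals the circular convolution h * x (where h is zero-padded and centered appropriately). Equivalently, for t ∈ {1,…,⌈f/2⌉}, (f^{-1/2} F_f* p)_t = (A)_{1t}. -/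
open Matrix

/-- The unitary `n × n` DFT matrix, `(F)_{lm} = n^{-1/2} exp(-2πi l m / n)` (0-based). -/
noncomputable def dft (n : ℕ) : Matrix (Fin n) (Fin n) ℂ :=
  fun l m => (1 / (Real.sqrt n : ℂ)) *
    Complex.exp (-(2 * Real.pi * Complex.I * (l : ℕ) * (m : ℕ)) / n)

namespace SubPSD

noncomputable def z (n : ℕ) : ℂ := Complex.exp (2 * Real.pi * Complex.I / n)

lemma z_prim (n : ℕ) [NeZero n] : IsPrimitiveRoot (z n) n :=
  Complex.isPrimitiveRoot_exp n (NeZero.ne n)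

lemma z_pow_n (n : ℕ) [NeZero n] : z n ^ n = 1 := (z_prim n).pow_eq_one

lemma z_pow_mod (n : ℕ) [NeZero n] (k : ℕ) : z n ^ (k % n) = z n ^ k := by
  conv_rhs => rw [← Nat.div_add_mod k n, pow_add, pow_mul, z_pow_n, one_pow, one_mul]

lemma dft_eq (n : ℕ) [NeZero n] (l m : Fin n) :
    dft n l m = (1 / (Real.sqrt n : ℂ)) * (z n ^ ((l : ℕ) * (m : ℕ)))⁻¹ := by
  unfold dft z
  rw [← Complex.exp_nat_mul, ← Complex.exp_neg]
  congr 1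
  push_cast
  ring

lemma conj_dft (n : ℕ) [NeZero n] (l m : Fin n) :
    (starRingEnd ℂ) (dft n l m) = (1 / (Real.sqrt n : ℂ)) * z n ^ ((l : ℕ) * (m : ℕ)) := by
  have hz : (starRingEnd ℂ) (z n) = (z n)⁻¹ := by
    unfold z
    rw [← Complex.exp_conj, ← Complex.exp_neg]
    congr 1
    simp only [map_div₀, _root_.map_mul, Complex.conj_I, Complex.conj_ofNat, Complex.conj_natCast,
      Complex.conj_ofReal]
    ring
  rw [dft_eq, _root_.map_mul, map_inv₀, map_pow, hz]
  rw [inv_pow, inv_inv]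
  congr 1
  rw [map_div₀, _root_.map_one, Complex.conj_ofReal]

lemma sum_z_pow (n : ℕ) [NeZero n] (c : ℕ) :
    ∑ m : Fin n, z n ^ ((m : ℕ) * c) = if n ∣ c then (n : ℂ) else 0 := by
  have h1 : ∀ m : Fin n, z n ^ ((m : ℕ) * c) = (z n ^ c) ^ (m : ℕ) := by
    intro m; rw [← pow_mul, mul_comm]
  simp only [h1]
  rw [Fin.sum_univ_eq_sum_range (fun i => (z n ^ c) ^ i)]
  by_cases hdvd : n ∣ c
  · have : z n ^ c = 1 := ((z_prim n).pow_eq_one_iff_dvd c).mpr hdvd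
    simp [this, hdvd]
  · have hne : z n ^ c ≠ 1 := fun h => hdvd (((z_prim n).pow_eq_one_iff_dvd c).mp h)
    rw [if_neg hdvd, geom_sum_eq hne n]
    rw [← pow_mul, mul_comm, pow_mul, z_pow_n, one_pow]
    simp

lemma sum_z_pair (n : ℕ) [NeZero n] (a b : Fin n) :
    ∑ l : Fin n, z n ^ ((l : ℕ) * (a : ℕ)) * (z n ^ ((l : ℕ) * (b : ℕ)))⁻¹
      = if a = b then (n : ℂ) else 0 := by
  have key : ∀ l : Fin n, z n ^ ((l : ℕ) * (a : ℕ)) * (z n ^ ((l : ℕ) * (b : ℕ)))⁻¹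
      = z n ^ ((l : ℕ) * ((a : ℕ) + (n - (b : ℕ)))) := by
    intro l
    have hb : (z n ^ ((l : ℕ) * (b : ℕ)))⁻¹ = z n ^ ((l : ℕ) * (n - (b : ℕ))) := by
      apply inv_eq_of_mul_eq_one_right
      rw [← pow_add]
      have : (l : ℕ) * (b : ℕ) + (l : ℕ) * (n - (b : ℕ)) = (l : ℕ) * n := by
        have := b.isLt.le
        rw [← Nat.mul_add]
        congr 1
        omega
      rw [this, mul_comm, pow_mul, z_pow_n, one_pow]
    rw [hb, ← pow_add, Nat.mul_add]
  simp only [key]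
  rw [sum_z_pow]
  have hiff : n ∣ (a : ℕ) + (n - (b : ℕ)) ↔ a = b := by
    constructor
    · intro ⟨k, hk⟩
      have ha := a.isLt; have hb := b.isLt
      have hn1 : 1 ≤ n := Nat.one_le_iff_ne_zero.mpr (NeZero.ne n)
      have hkpos : 0 < k := by
        rcases Nat.eq_zero_or_pos k with h | h
        · exfalso; subst h; omega
        · exact h
      have hklt : k < 2 := by
        by_contra h
        push_neg at h
        have : n * 2 ≤ n * k := Nat.mul_le_mul_left n h
        omega
      have hk1 : k = 1 := by omega
      subst hk1
      exact Fin.ext (by omega)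
    · rintro rfl; exact ⟨1, by have := a.isLt.le; omega⟩
  simp [hiff]

lemma sqrt_sq (n : ℕ) [NeZero n] :
    (1 / (Real.sqrt n : ℂ)) * (1 / (Real.sqrt n : ℂ)) = 1 / (n : ℂ) := by
  rw [div_mul_div_comm, one_mul, ← Complex.ofReal_mul,
    Real.mul_self_sqrt (Nat.cast_nonneg n)]
  push_cast
  ring

lemma dft_unitary (n : ℕ) [NeZero n] : (dft n)ᴴ * dft n = 1 := by
  ext a b
  simp only [Matrix.mul_apply, conjTranspose_apply, Complex.star_def, conj_dft,
    Matrix.one_apply]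
  simp only [dft_eq]
  have : ∀ l : Fin n, 1 / (Real.sqrt n : ℂ) * z n ^ ((l : ℕ) * (a : ℕ)) *
      (1 / (Real.sqrt n : ℂ) * (z n ^ ((l : ℕ) * (b : ℕ)))⁻¹)
      = (1 / (n : ℂ)) * (z n ^ ((l : ℕ) * (a : ℕ)) * (z n ^ ((l : ℕ) * (b : ℕ)))⁻¹) := by
    intro l; rw [← sqrt_sq n]; ring
  rw [show (∑ x : Fin n, 1 / (Real.sqrt n : ℂ) * z n ^ ((x : ℕ) * (a : ℕ)) *
      (1 / (Real.sqrt n : ℂ) * (z n ^ ((x : ℕ) * (b : ℕ)))⁻¹)) = ∑ x : Fin n,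
      (1 / (n : ℂ)) * (z n ^ ((x : ℕ) * (a : ℕ)) * (z n ^ ((x : ℕ) * (b : ℕ)))⁻¹) from
    Finset.sum_congr rfl (fun l _ => this l), ← Finset.mul_sum, sum_z_pair]
  have hn : (n : ℂ) ≠ 0 := Nat.cast_ne_zero.mpr (NeZero.ne n)
  by_cases h : a = b
  · rw [if_pos h, if_pos h]
    field_simp
  · rw [if_neg h, if_neg h, mul_zero]

lemma z_pow_fin_add (n : ℕ) [NeZero n] (a b : Fin n) (c : ℕ) :
    z n ^ (((a + b : Fin n) : ℕ) * c) = z n ^ ((a : ℕ) * c) * z n ^ ((b : ℕ) * c) := by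
  have h : ((a + b : Fin n) : ℕ) = ((a : ℕ) + (b : ℕ)) % n := Fin.val_add a b
  rw [h, pow_mul, z_pow_mod, ← pow_mul, add_mul, pow_add]

lemma q_eq {n : ℕ} [NeZero n] (v : Fin n → ℝ) (q : Fin n → ℂ)
    (hq : (circulant v).map Complex.ofReal = dft n * diagonal q * (dft n)ᴴ) (m : Fin n) :
    q m = ∑ j : Fin n, (v j : ℂ) * z n ^ ((j : ℕ) * (m : ℕ)) := by
  have hD : diagonal q = (dft n)ᴴ * ((circulant v).map Complex.ofReal) * dft n := by
    rw [hq, show (dft n)ᴴ * (dft n * diagonal q * (dft n)ᴴ) * dft n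
      = ((dft n)ᴴ * dft n) * diagonal q * ((dft n)ᴴ * dft n) by
        simp only [Matrix.mul_assoc], dft_unitary, Matrix.one_mul, Matrix.mul_one]
  have h1 : q m = ∑ b : Fin n, (∑ a : Fin n, (starRingEnd ℂ) (dft n a m)
      * ((v (a - b) : ℝ) : ℂ)) * dft n b m := by
    have h := congrFun (congrFun hD m) m
    rw [Matrix.diagonal_apply_eq] at h
    rw [h]
    simp only [Matrix.mul_apply, Matrix.conjTranspose_apply, Matrix.map_apply,
      Matrix.circulant_apply, Complex.star_def]
  set S := ∑ j : Fin n, (v j : ℂ) * z n ^ ((j : ℕ) * (m : ℕ)) with hS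
  have h2 : ∀ b : Fin n, (∑ a : Fin n, (starRingEnd ℂ) (dft n a m) * ((v (a - b) : ℝ) : ℂ))
      = 1 / (Real.sqrt n : ℂ) * z n ^ ((b : ℕ) * (m : ℕ)) * S := by
    intro b
    rw [hS, Finset.mul_sum]
    refine (Fintype.sum_equiv (Equiv.addRight b)
      (fun j => 1 / (Real.sqrt n : ℂ) * z n ^ ((b : ℕ) * (m : ℕ))
        * ((v j : ℂ) * z n ^ ((j : ℕ) * (m : ℕ))))
      (fun a => (starRingEnd ℂ) (dft n a m) * ((v (a - b) : ℝ) : ℂ)) ?_).symm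
    intro j
    simp only [Equiv.coe_addRight]
    rw [conj_dft, add_sub_cancel_right, z_pow_fin_add]
    ring
  have h3 : ∀ b : Fin n, (1 / (Real.sqrt n : ℂ) * z n ^ ((b : ℕ) * (m : ℕ)) * S) * dft n b m
      = (1 / (n : ℂ)) * S := by
    intro b
    rw [dft_eq]
    have hzz : z n ^ ((b : ℕ) * (m : ℕ)) * (z n ^ ((b : ℕ) * (m : ℕ)))⁻¹ = 1 :=
      mul_inv_cancel₀ (pow_ne_zero _ (Complex.exp_ne_zero _))
    calc 1 / (Real.sqrt n : ℂ) * z n ^ ((b : ℕ) * (m : ℕ)) * S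
        * (1 / (Real.sqrt n : ℂ) * (z n ^ ((b : ℕ) * (m : ℕ)))⁻¹)
        = (1 / (Real.sqrt n : ℂ) * (1 / (Real.sqrt n : ℂ)))
          * (z n ^ ((b : ℕ) * (m : ℕ)) * (z n ^ ((b : ℕ) * (m : ℕ)))⁻¹) * S := by ring
      _ = (1 / (n : ℂ)) * S := by rw [sqrt_sq, hzz, mul_one]
  rw [h1]
  rw [Finset.sum_congr rfl fun b _ => by rw [h2 b, h3 b]]
  rw [Finset.sum_const, Finset.card_univ, Fintype.card_fin, nsmul_eq_mul]
  have hn : (n : ℂ) ≠ 0 := Nat.cast_ne_zero.mpr (NeZero.ne n)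
  field_simp

lemma z_pow_div (n f : ℕ) [NeZero n] [NeZero f] (h : f ∣ n) : z n ^ (n / f) = z f := by
  obtain ⟨d, hd⟩ := h
  have hd0 : d ≠ 0 := by rintro rfl; exact NeZero.ne n (by omega)
  have hnf : n / f = d := by rw [hd, Nat.mul_div_cancel_left _ (Nat.pos_of_ne_zero (NeZero.ne f))]
  unfold z
  rw [← Complex.exp_nat_mul]
  congr 1
  rw [hnf, hd]
  have hfC : (f : ℂ) ≠ 0 := Nat.cast_ne_zero.mpr (NeZero.ne f)
  have hdC : (d : ℂ) ≠ 0 := Nat.cast_ne_zero.mpr hd0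
  push_cast
  field_simp

lemma fin_val_neg {n : ℕ} [NeZero n] (a : Fin n) : ((-a : Fin n) : ℕ) = (n - (a : ℕ)) % n := by
  rw [Fin.neg_def]

end SubPSD

open SubPSD

/-- For `A ∈ E_{f,n}` (symmetric circulant with first row vanishing on the middle band),
with Fourier diagonalization `A = Fₙ diag(q) Fₙ*`, `f ∣ n`, and `p` the subsampled PSD
`(p)_l = (q)_{(l-1)n/f+1}`, the inverse DFT of `p` recovers the first row of `A`:
for `t ∈ {1,…,⌈f/2⌉}`, `(f^{-1/2} F_f* p)_t = (A)_{1t}`. -/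
theorem subsampled_psd_gives_filter {n f : ℕ} [NeZero n]
    (hf : 0 < f) (hdvd : f ∣ n) (hle : f ≤ n)
    (A : Matrix (Fin n) (Fin n) ℝ) (v : Fin n → ℝ)
    (hcirc : A = circulant v) (hsymm : A.IsSymm) (hpos : A.PosDef)
    (hzero : ∀ l : Fin n,
      (f + 1) / 2 + 1 ≤ (l : ℕ) + 1 → (l : ℕ) + 1 ≤ n - f / 2 → A 0 l = 0)
    (q : Fin n → ℂ)
    (hq : A.map Complex.ofReal = dft n * diagonal q * (dft n)ᴴ)
    (p : Fin f → ℂ)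
    (hp : ∀ l : Fin f, ∀ h : (l : ℕ) * (n / f) < n, p l = q ⟨(l : ℕ) * (n / f), h⟩) :
    ∀ t : Fin f, (t : ℕ) < (f + 1) / 2 →
      ((1 / (Real.sqrt f : ℂ)) • ((dft f)ᴴ *ᵥ p)) t
        = ((A 0 (Fin.castLE hle t) : ℝ) : ℂ) := by
  subst hcirc
  intro t ht
  have hf0 : f ≠ 0 := hf.ne'
  haveI : NeZero f := ⟨hf0⟩
  have hn0 : n ≠ 0 := NeZero.ne n
  obtain ⟨d, hd⟩ := hdvd
  have hd0 : 0 < d := by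
    rcases Nat.eq_zero_or_pos d with h | h
    · rw [h, Nat.mul_zero] at hd
      exact absurd hd hn0
    · exact h
  have hnf : n / f = d := by rw [hd, Nat.mul_div_cancel_left _ hf]
  have hqf := q_eq v q hq
  have hlt : ∀ l : Fin f, (l : ℕ) * (n / f) < n := by
    intro l
    rw [hnf, hd]
    exact Nat.mul_lt_mul_of_lt_of_le l.isLt (le_refl d) hd0
  have hpv : ∀ l : Fin f, p l = ∑ j : Fin n, (v j : ℂ) * z f ^ ((j : ℕ) * (l : ℕ)) := by
    intro l
    rw [hp l (hlt l), hqf]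
    refine Finset.sum_congr rfl fun j _ => ?_
    congr 1
    show z n ^ ((j : ℕ) * ((l : ℕ) * (n / f))) = z f ^ ((j : ℕ) * (l : ℕ))
    rw [show (j : ℕ) * ((l : ℕ) * (n / f)) = (n / f) * ((j : ℕ) * (l : ℕ)) by ring,
      pow_mul, z_pow_div n f ⟨d, hd⟩]
  have hfC : (f : ℂ) ≠ 0 := Nat.cast_ne_zero.mpr hf0
  have hLHS : ((1 / (Real.sqrt f : ℂ)) • ((dft f)ᴴ *ᵥ p)) t
      = ∑ j : Fin n, (if f ∣ (t : ℕ) + (j : ℕ) then (v j : ℂ) else 0) := by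
    rw [Pi.smul_apply, smul_eq_mul]
    have e1 : ((dft f)ᴴ *ᵥ p) t = ∑ l : Fin f, (starRingEnd ℂ) (dft f l t) * p l := by
      rw [Matrix.mulVec]
      simp only [dotProduct, Matrix.conjTranspose_apply, Complex.star_def]
    rw [e1, Finset.mul_sum]
    have e2 : ∀ l : Fin f, (1 / (Real.sqrt f : ℂ)) * ((starRingEnd ℂ) (dft f l t) * p l)
        = ∑ j : Fin n, (1 / (f : ℂ)) * ((v j : ℂ) * z f ^ ((l : ℕ) * ((t : ℕ) + (j : ℕ)))) := by
      intro l
      rw [conj_dft, hpv l, Finset.mul_sum, Finset.mul_sum]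
      refine Finset.sum_congr rfl fun j _ => ?_
      rw [show (l : ℕ) * ((t : ℕ) + (j : ℕ)) = (l : ℕ) * (t : ℕ) + (j : ℕ) * (l : ℕ) by ring,
        pow_add, ← sqrt_sq f]
      ring
    rw [Finset.sum_congr rfl fun l _ => e2 l, Finset.sum_comm]
    refine Finset.sum_congr rfl fun j _ => ?_
    rw [← Finset.mul_sum, ← Finset.mul_sum, sum_z_pow f ((t : ℕ) + (j : ℕ))]
    by_cases hdv : f ∣ (t : ℕ) + (j : ℕ)
    · rw [if_pos hdv, if_pos hdv]
      field_simp
    · rw [if_neg hdv, if_neg hdv, mul_zero, mul_zero]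
  set s : Fin n := Fin.castLE hle t with hs
  have hsval : (s : ℕ) = (t : ℕ) := rfl
  set j₀ : Fin n := -s with hj₀
  have hj₀val : (j₀ : ℕ) = (n - (t : ℕ)) % n := by rw [hj₀, fin_val_neg, hsval]
  have htf : (t : ℕ) < f := by omega
  have hRHS : circulant v 0 (Fin.castLE hle t) = v j₀ := by
    rw [Matrix.circulant_apply, zero_sub]
  rw [hLHS, hRHS]
  have hsum : ∑ j : Fin n, (if f ∣ (t : ℕ) + (j : ℕ) then (v j : ℂ) else 0) = (v j₀ : ℂ) := by
    rw [Finset.sum_eq_single j₀]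
    · rw [if_pos]
      rcases Nat.eq_zero_or_pos (t : ℕ) with h0 | h1
      · rw [h0, hj₀val, h0]
        simp
      · have : (j₀ : ℕ) = n - (t : ℕ) := by
          rw [hj₀val, Nat.mod_eq_of_lt (by omega)]
        rw [this, show (t : ℕ) + (n - (t : ℕ)) = n by omega, hd]
        exact ⟨d, rfl⟩
    · intro j _ hne
      by_cases hdv : f ∣ (t : ℕ) + (j : ℕ)
      case neg => rw [if_neg hdv]
      rw [if_pos hdv]
      obtain ⟨k, hk⟩ := hdv
      have hj1 : 1 ≤ (j : ℕ) := by
        by_contra h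
        push_neg at h
        have hj0 : (j : ℕ) = 0 := by omega
        have ht0 : (t : ℕ) = 0 := by
          have hk0 : k = 0 := by
            rcases Nat.eq_zero_or_pos k with h' | h'
            · exact h'
            · exfalso
              have hle' : f * 1 ≤ f * k := Nat.mul_le_mul_left f h'
              rw [Nat.mul_one] at hle'
              omega
          rw [hk0, Nat.mul_zero] at hk
          omega
        apply hne
        apply Fin.ext
        rw [hj₀val, hj0, ht0]
        simp
      have hk1 : 1 ≤ k := by
        rcases Nat.eq_zero_or_pos k with h' | h'
        · exfalso
          rw [h', Nat.mul_zero] at hk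
          omega
        · exact h'
      have hkd : k < d := by
        by_contra h'
        push_neg at h'
        have hup : k < d + 1 := by
          have h1 : f * k < f * (d + 1) := by
            rw [Nat.mul_add, ← hd]
            have := j.isLt
            omega
          exact Nat.lt_of_mul_lt_mul_left h1
        have hkd' : k = d := by omega
        subst hkd'
        have hjn : (t : ℕ) + (j : ℕ) = n := by rw [hk, hd]
        rcases Nat.eq_zero_or_pos (t : ℕ) with h0 | h1
        · have := j.isLt; omega
        · apply hne
          apply Fin.ext
          rw [hj₀val, Nat.mod_eq_of_lt (by omega)]
          omega
      have hlow : f ≤ f * k := Nat.le_mul_of_pos_right f hk1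
      have hhigh : f * k + f ≤ f * d := by
        have : f * (k + 1) ≤ f * d := Nat.mul_le_mul_left f hkd
        rw [Nat.mul_add, Nat.mul_one] at this
        exact this
      have hjlt := j.isLt
      have hb1 : f / 2 + 1 ≤ (j : ℕ) := by omega
      have hb2 : (j : ℕ) + (f + 1) / 2 ≤ n := by omega
      have hlval : ((-j : Fin n) : ℕ) = n - (j : ℕ) := by
        rw [fin_val_neg, Nat.mod_eq_of_lt (by omega)]
      have hz := hzero (-j) (by rw [hlval]; omega) (by rw [hlval]; omega)
      rw [Matrix.circulant_apply, zero_sub, neg_neg] at hz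
      rw [hz, Complex.ofReal_zero]
    · intro h
      exact absurd (Finset.mem_univ _) h
  exact hsum
end
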